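/- A topological space is Polish if and only if it is quasi-Polish and regular. -/

import Mathlib

open TopologicalSpace Set Topology

/-- A Π⁰₂ set: a countable intersection of sets of the form (complement of open) ∪ open. -/
def IsPi02 {X : Type*} [TopologicalSpace X] (s : Set X) : Prop :=
  ∃ U V : ℕ → Set X, (∀ n, IsOpen (U n)) ∧ (∀ n, IsOpen (V n)) ∧
    s = ⋂ n, ((U n)ᶜ ∪ V n)

/-- A quasi-Polish space: homeomorphic to a Π⁰₂ subspace of 𝕊^ℕ,
where 𝕊 is the Sierpiński space (`Prop` with its topology in Mathlib). -/
def QuasiPolish (X : Type*) [TopologicalSpace X] : Prop :=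
  ∃ s : Set (ℕ → Prop), IsPi02 s ∧ Nonempty (X ≃ₜ s)


/-!
Fix a complete metric and a dense sequence on a Polish space `X`. Coding a point by the set of balls
`ball (u i) 2⁻ʲ` containing it embeds `X` into `𝕊^ℕ`. A code contains some ball, is upward closed
under "the closed ball `l` lies in the ball `i`", and any two of its balls contain a closed ball of
it of at most half the radius; each condition is "open implies open", hence `Π⁰₂`. Conversely, the
nested closed balls of a set `p` with these properties shrink to a point (completeness), whose code
is `p`.

A quasi-Polish regular space `X` is second countable and T₃, hence metrizable, so it embeds in the
completion `Y` of a compatible metric. Every open set of `X` is the trace of an open set of `Y`, so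
the embedding `e : X → 𝕊^ℕ` onto a `Π⁰₂` set `s` extends to a continuous `G : Y → 𝕊^ℕ`. Then
`G ⁻¹' s` is `Π⁰₂`, hence `G_δ` in the metrizable `Y`, hence Polish, and `X` is a retract of it
via `y ↦ e⁻¹ (G y)`: a closed subspace, hence Polish.
-/

open Filter

section Pi02

variable {X Y : Type*} [TopologicalSpace X] [TopologicalSpace Y]

theorem isPi02_iInter_compl_union {ι : Type*} [Countable ι] {U V : ι → Set X}
    (hU : ∀ i, IsOpen (U i)) (hV : ∀ i, IsOpen (V i)) : IsPi02 (⋂ i, (U i)ᶜ ∪ V i) := by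
  rcases isEmpty_or_nonempty ι with hι | hι
  · exact ⟨fun _ => ∅, fun _ => ∅, fun _ => isOpen_empty, fun _ => isOpen_empty, by simp⟩
  · obtain ⟨f, hf⟩ := exists_surjective_nat ι
    exact ⟨U ∘ f, V ∘ f, fun n => hU _, fun n => hV _, (hf.iInter_comp fun i => (U i)ᶜ ∪ V i).symm⟩

theorem isPi02_compl_union {U V : Set X} (hU : IsOpen U) (hV : IsOpen V) : IsPi02 (Uᶜ ∪ V) :=
  ⟨fun _ => U, fun _ => V, fun _ => hU, fun _ => hV, (iInter_const _).symm⟩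

theorem IsOpen.isPi02 {s : Set X} (hs : IsOpen s) : IsPi02 s := by
  simpa using isPi02_compl_union isOpen_univ hs

theorem IsClosed.isPi02 {s : Set X} (hs : IsClosed s) : IsPi02 s := by
  simpa using isPi02_compl_union hs.isOpen_compl isOpen_empty

theorem isPi02_setOf_imp {P Q : X → Prop} (hP : IsOpen {x | P x}) (hQ : IsOpen {x | Q x}) :
    IsPi02 {x | P x → Q x} := by
  convert isPi02_compl_union hP hQ using 1
  ext x
  simp [imp_iff_not_or]

theorem IsPi02.iInter {ι : Type*} [Countable ι] {s : ι → Set X} (hs : ∀ i, IsPi02 (s i)) :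
    IsPi02 (⋂ i, s i) := by
  choose U V hU hV hUV using hs
  convert isPi02_iInter_compl_union (U := fun x : ι × ℕ => U x.1 x.2) (V := fun x => V x.1 x.2)
    (fun x => hU _ _) (fun x => hV _ _) using 1
  ext x
  simp [hUV]

theorem IsPi02.inter {s t : Set X} (hs : IsPi02 s) (ht : IsPi02 t) : IsPi02 (s ∩ t) := by
  rw [inter_eq_iInter]
  exact .iInter (Bool.forall_bool.2 ⟨ht, hs⟩)

theorem IsPi02.preimage {s : Set Y} (hs : IsPi02 s) {f : X → Y} (hf : Continuous f) :
    IsPi02 (f ⁻¹' s) := by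
  obtain ⟨U, V, hU, hV, rfl⟩ := hs
  simpa only [preimage_iInter, preimage_union, preimage_compl] using
    isPi02_iInter_compl_union (fun n => (hU n).preimage hf) (fun n => (hV n).preimage hf)

theorem IsPi02.isGδ [PerfectlyNormalSpace X] {s : Set X} (hs : IsPi02 s) : IsGδ s := by
  obtain ⟨U, V, hU, hV, rfl⟩ := hs
  exact .iInter fun n => (hU n).isClosed_compl.isGδ.union (hV n).isGδ

end Pi02

theorem IsGδ.polishSpace {X : Type*} [TopologicalSpace X] [PolishSpace X] {s : Set X}
    (hs : IsGδ s) : PolishSpace s := by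
  obtain ⟨U, hU, rfl⟩ := isGδ_iff_eq_iInter_nat.1 hs
  have (n : ℕ) : PolishSpace (U n) := (hU n).polishSpace
  let diag : (⋂ n, U n : Set X) → ∀ n, U n := fun x n => ⟨x, mem_iInter.1 x.2 n⟩
  have hdiag : IsEmbedding diag :=
    .of_comp (g := fun f => (f 0 : X)) (by fun_prop) (by fun_prop) IsEmbedding.subtypeVal
  have hrange : range diag = ⋂ n, {f | (f n : X) = f 0} := by
    ext f
    simp only [mem_range, mem_iInter, mem_ofPred_eq]
    refine ⟨?_, fun h => ⟨⟨f 0, mem_iInter.2 fun n => h n ▸ (f n).2⟩,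
      funext fun n => Subtype.ext (h n).symm⟩⟩
    rintro ⟨x, rfl⟩ n
    rfl
  refine (IsClosedEmbedding.mk hdiag ?_).polishSpace
  rw [hrange]
  exact isClosed_iInter fun n => isClosed_eq (by fun_prop) (by fun_prop)

theorem isOpen_setOf_apply {ι : Type*} (i : ι) : IsOpen {p : ι → Prop | p i} :=
  continuous_Prop.1 (continuous_apply i)

theorem Topology.IsInducing.exists_continuous_pi_prop_extension {X Y ι : Type*}
    [TopologicalSpace X] [TopologicalSpace Y] {f : X → Y} (hf : IsInducing f)
    {g : X → ι → Prop} (hg : Continuous g) :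
    ∃ G : Y → ι → Prop, Continuous G ∧ ∀ x, G (f x) = g x := by
  have (i : ι) : ∃ O : Set Y, IsOpen O ∧ f ⁻¹' O = {x | g x i} :=
    hf.isOpen_iff.1 <| (isOpen_setOf_apply i).preimage hg
  choose O hO hOf using this
  refine ⟨fun y i => y ∈ O i, continuous_pi fun i => continuous_Prop.2 (hO i), ?_⟩
  intro x
  ext i
  exact Set.ext_iff.1 (hOf i) x

namespace QuasiPolish

variable {X : Type*} [TopologicalSpace X]

theorem secondCountableTopology (hX : QuasiPolish X) : SecondCountableTopology X := by
  obtain ⟨_, -, ⟨e⟩⟩ := hX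
  exact e.isEmbedding.secondCountableTopology

theorem t0Space (hX : QuasiPolish X) : T0Space X := by
  obtain ⟨_, -, ⟨e⟩⟩ := hX
  exact e.isEmbedding.t0Space

theorem polishSpace_of_isInducing {Y : Type*} [TopologicalSpace Y] [PolishSpace Y]
    (hX : QuasiPolish X) {f : X → Y} (hf : IsInducing f) : PolishSpace X := by
  obtain ⟨s, hs, ⟨e⟩⟩ := hX
  obtain ⟨G, hG, hGf⟩ := hf.exists_continuous_pi_prop_extension (g := fun x => (e x : ℕ → Prop))
    (by fun_prop)
  have : PolishSpace (G ⁻¹' s) := ((hs.preimage hG).isGδ).polishSpace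
  let retraction : G ⁻¹' s → X := fun y => e.symm ⟨G y, y.2⟩
  let inclusion : X → G ⁻¹' s := fun x => ⟨f x, by rw [mem_preimage, hGf]; exact (e x).2⟩
  have hleft : Function.LeftInverse retraction inclusion := fun x => by
    simp [retraction, inclusion, hGf]
  exact (hleft.isClosedEmbedding (by fun_prop) (by fun_prop)).polishSpace

theorem polishSpace_of_regularSpace (hX : QuasiPolish X) [RegularSpace X] : PolishSpace X := by
  have := hX.secondCountableTopology
  have := hX.t0Space
  let := metrizableSpaceMetric X
  exact hX.polishSpace_of_isInducing (UniformSpace.Completion.isUniformInducing_coe X).isInducing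

end QuasiPolish

theorem TopologicalSpace.IsTopologicalBasis.isInducing_mem {X ι : Type*} [TopologicalSpace X]
    {B : ι → Set X} (hB : IsTopologicalBasis (range B)) : IsInducing fun x i => x ∈ B i := by
  have hcont : Continuous fun x i => x ∈ B i :=
    continuous_pi fun i => continuous_Prop.2 (hB.isOpen (mem_range_self i))
  refine isInducing_iff_nhds.2 fun x => le_antisymm (hcont.tendsto x).le_comap ?_
  refine (hB.nhds_hasBasis).ge_iff.2 ?_
  rintro _ ⟨⟨i, rfl⟩, hx⟩
  exact Filter.preimage_mem_comap ((isOpen_setOf_apply i).mem_nhds hx)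

theorem isOpen_setOf_exists {X ι : Type*} [TopologicalSpace X] {P : ι → X → Prop}
    (hP : ∀ i, IsOpen {x | P i x}) : IsOpen {x | ∃ i, P i x} := by
  rw [ofPred_exists]
  exact isOpen_iUnion hP

namespace Metric

variable {X ι : Type*} [MetricSpace X] (c : ι → X) (r : ι → ℝ)

def ballCode (x : X) : ι → Prop := fun i => x ∈ ball (c i) (r i)

def ballCodes : Set (ι → Prop) :=
  {p | (∃ i, p i) ∧
    (∀ i k, p i ∧ p k →
      ∃ l, p l ∧ closedBall (c l) (r l) ⊆ ball (c i) (r i) ∩ ball (c k) (r k) ∧ 2 * r l ≤ r i) ∧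
    (∀ i l, p l ∧ closedBall (c l) (r l) ⊆ ball (c i) (r i) → p i)}

variable {c r}

theorem isPi02_ballCodes [Countable ι] : IsPi02 (ballCodes c r) := by
  simp only [ballCodes, ofPred_and, ofPred_forall]
  refine (isOpen_setOf_exists isOpen_setOf_apply).isPi02.inter
    ((IsPi02.iInter fun i : ι => .iInter fun k : ι => isPi02_setOf_imp ?_ ?_).inter
    (.iInter fun i : ι => .iInter fun l : ι => isPi02_setOf_imp ?_ (isOpen_setOf_apply i)))
  · exact (isOpen_setOf_apply i).inter (isOpen_setOf_apply k)
  · exact isOpen_setOf_exists fun l => (isOpen_setOf_apply l).inter isOpen_const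
  · exact (isOpen_setOf_apply l).inter isOpen_const

section Basis

variable (hbasis : ∀ x, ∀ ε > 0, ∃ i, x ∈ ball (c i) (r i) ∧ r i ≤ ε)
include hbasis

theorem exists_mem_ball_closedBall_subset {x : X} {U : Set X} (hU : IsOpen U) (hx : x ∈ U)
    {δ : ℝ} (hδ : 0 < δ) : ∃ i, x ∈ ball (c i) (r i) ∧ closedBall (c i) (r i) ⊆ U ∧ r i ≤ δ := by
  obtain ⟨ε, hε, hεU⟩ := Metric.isOpen_iff.1 hU x hx
  obtain ⟨i, hxi, hri⟩ := hbasis x (min δ (ε / 2)) (by positivity)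
  refine ⟨i, hxi, (closedBall_subset_ball' ?_).trans hεU, hri.trans (min_le_left _ _)⟩
  have := min_le_right δ (ε / 2)
  rw [mem_ball] at hxi
  rw [dist_comm]
  linarith

theorem isTopologicalBasis_range_ball : IsTopologicalBasis (range fun i => ball (c i) (r i)) := by
  refine isTopologicalBasis_of_isOpen_of_nhds (by rintro _ ⟨i, rfl⟩; exact isOpen_ball) ?_
  intro x U hx hU
  obtain ⟨i, hxi, hiU, -⟩ := exists_mem_ball_closedBall_subset hbasis hU hx one_pos
  exact ⟨_, mem_range_self i, hxi, ball_subset_closedBall.trans hiU⟩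

theorem isEmbedding_ballCode : IsEmbedding (ballCode c r) :=
  (isTopologicalBasis_range_ball hbasis).isInducing_mem.isEmbedding

theorem ballCode_mem_ballCodes (x : X) : ballCode c r x ∈ ballCodes c r := by
  refine ⟨?_, ?_, fun i l ⟨hxl, hli⟩ => hli (ball_subset_closedBall hxl)⟩
  · obtain ⟨i, hxi, -⟩ := hbasis x 1 one_pos
    exact ⟨i, hxi⟩
  · rintro i k ⟨hxi, hxk⟩
    have hri : 0 < r i := pos_of_mem_ball hxi
    obtain ⟨l, hxl, hlik, hrl⟩ :=
      exists_mem_ball_closedBall_subset hbasis (isOpen_ball.inter isOpen_ball) ⟨hxi, hxk⟩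
        (half_pos hri)
    exact ⟨l, hxl, hlik, by linarith⟩

end Basis

section Complete

variable (hr : ∀ i, 0 ≤ r i) {p : ι → Prop} (hp : p ∈ ballCodes c r)
include hr hp

theorem exists_forall_dist_le_of_mem_ballCodes [CompleteSpace X] :
    ∃ x, ∀ ε > 0, ∃ l, p l ∧ dist x (c l) ≤ r l ∧ r l < ε := by
  obtain ⟨⟨i₀, hi₀⟩, hmeet, -⟩ := hp
  have step (i : ι) (hi : p i) :
      ∃ l, p l ∧ closedBall (c l) (r l) ⊆ ball (c i) (r i) ∧ 2 * r l ≤ r i := by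
    simpa only [inter_self] using hmeet i i ⟨hi, hi⟩
  choose! g hgp hgsub hgr using step
  let K : ℕ → ι := fun j => g^[j] i₀
  have hK_succ (j : ℕ) : K (j + 1) = g (K j) := Function.iterate_succ_apply' g j i₀
  have hK (j : ℕ) : p (K j) := by
    induction j with
    | zero => exact hi₀
    | succ j ih => exact hK_succ j ▸ hgp _ ih
  have hK_anti : Antitone fun j => closedBall (c (K j)) (r (K j)) := by
    refine antitone_nat_of_succ_le fun j => ?_
    rw [hK_succ]
    exact (hgsub _ (hK j)).trans ball_subset_closedBall
  have hK_r (j : ℕ) : r (K j) ≤ r i₀ * (1 / 2) ^ j := by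
    induction j with
    | zero => simp [K]
    | succ j ih =>
      rw [hK_succ, pow_succ]
      linarith [hgr _ (hK j)]
  have hK_lim : Tendsto (fun j => r (K j)) atTop (𝓝 0) := by
    refine squeeze_zero (fun j => hr _) hK_r ?_
    simpa using (tendsto_pow_atTop_nhds_zero_of_lt_one (r := (1 / 2 : ℝ)) (by norm_num)
      (by norm_num)).const_mul (r i₀)
  have hdiam : Tendsto (fun j => diam (closedBall (c (K j)) (r (K j)))) atTop (𝓝 0) := by
    refine squeeze_zero (fun j => diam_nonneg) (fun j => diam_closedBall (hr _)) ?_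
    simpa using hK_lim.const_mul 2
  obtain ⟨x, hx⟩ := nonempty_iInter_of_nonempty_biInter (fun j => isClosed_closedBall)
    (fun j => isBounded_closedBall)
    (fun N => ⟨c (K N), mem_iInter₂.2 fun j hj => hK_anti hj (mem_closedBall_self (hr _))⟩) hdiam
  refine ⟨x, fun ε hε => ?_⟩
  obtain ⟨j, hj⟩ := (hK_lim.eventually (gt_mem_nhds hε)).exists
  exact ⟨K j, hK j, mem_iInter.1 hx j, hj⟩

theorem ballCode_eq_of_forall_dist_le {x : X}
    (hx : ∀ ε > 0, ∃ l, p l ∧ dist x (c l) ≤ r l ∧ r l < ε) : ballCode c r x = p := by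
  obtain ⟨-, hmeet, hup⟩ := hp
  ext i
  constructor
  · intro hxi
    obtain ⟨ε, hε, hεi⟩ := isOpen_iff.1 isOpen_ball x hxi
    obtain ⟨l, hl, hxl, hrl⟩ := hx (ε / 2) (half_pos hε)
    refine hup i l ⟨hl, (closedBall_subset_ball' ?_).trans hεi⟩
    rw [dist_comm]
    linarith
  · intro hi
    -- `x` lies in a closed ball of `p` inside `ball (c i) (r i)`: it is arbitrarily close to balls
    -- of `p`, all of which meet that closed ball.
    obtain ⟨k, hk, hki, -⟩ := hmeet i i ⟨hi, hi⟩
    refine (hki ?_).1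
    refine mem_closedBall.2 (le_of_forall_pos_lt_add fun ε hε => ?_)
    obtain ⟨l, hl, hxl, hrl⟩ := hx (ε / 2) (half_pos hε)
    obtain ⟨m, hm, hmkl, -⟩ := hmeet k l ⟨hk, hl⟩
    obtain ⟨hmk, hml⟩ := hmkl (mem_closedBall_self (hr m))
    rw [mem_ball] at hmk hml
    linarith [dist_triangle4 x (c l) (c m) (c k), dist_comm (c l) (c m)]

end Complete

theorem range_ballCode [CompleteSpace X] (hr : ∀ i, 0 ≤ r i)
    (hbasis : ∀ x, ∀ ε > 0, ∃ i, x ∈ ball (c i) (r i) ∧ r i ≤ ε) :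
    range (ballCode c r) = ballCodes c r := by
  refine (range_subset_iff.2 (ballCode_mem_ballCodes hbasis)).antisymm fun p hp => ?_
  obtain ⟨x, hx⟩ := exists_forall_dist_le_of_mem_ballCodes hr hp
  exact ⟨x, ballCode_eq_of_forall_dist_le hr hp hx⟩

end Metric

theorem quasiPolish_of_polishSpace {X : Type*} [TopologicalSpace X] [PolishSpace X] :
    QuasiPolish X := by
  rcases isEmpty_or_nonempty X with hX | hX
  · exact ⟨∅, isClosed_empty.isPi02, ⟨.empty⟩⟩
  let := upgradeIsCompletelyMetrizable X
  obtain ⟨u, hu⟩ := exists_dense_seq X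
  let c (n : ℕ) : X := u n.unpair.1
  let r (n : ℕ) : ℝ := (1 / 2) ^ n.unpair.2
  have hbasis : ∀ x, ∀ ε > 0, ∃ n, x ∈ Metric.ball (c n) (r n) ∧ r n ≤ ε := by
    intro x ε hε
    obtain ⟨j, hj⟩ := exists_pow_lt_of_lt_one hε (by norm_num : (1 / 2 : ℝ) < 1)
    obtain ⟨i, hi⟩ := hu.exists_dist_lt x (by positivity : (0 : ℝ) < (1 / 2) ^ j)
    exact ⟨Nat.pair i j, by simpa [c, r, dist_comm] using hi, by simpa [r] using hj.le⟩
  refine ⟨_, Metric.range_ballCode (fun n => by positivity) hbasis ▸ Metric.isPi02_ballCodes,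
    ⟨(Metric.isEmbedding_ballCode hbasis).toHomeomorph⟩⟩

theorem polish_iff_quasiPolish_regular {X : Type*} [TopologicalSpace X] :
    PolishSpace X ↔ QuasiPolish X ∧ RegularSpace X := by
  constructor
  · intro _
    exact ⟨quasiPolish_of_polishSpace, inferInstance⟩
  · rintro ⟨hX, _⟩
    exact hX.polishSpace_of_regularSpace
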